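/- Let α ∈ ℂ be any root of the polynomial X⁵ − 10X⁴ − 481X³ − 4440X² − 16428X − 21904, and let K = ℚ(√−74) be the subfield of ℂ generated over ℚ by i√74. Then the field K(√37, α), obtained from K by adjoining the positive real square root √37 of 37 and α, is an extension of K of degree 10; equivalently, [ℚ(i√2, √37, α) : ℚ] = 20. -/

import Mathlib

/-!
The quintic is irreducible over `ℚ`, since its reduction `X⁵ + 2X⁴ + 2X³ + 2` modulo `3` has
neither a root nor a monic quadratic factor; hence `[ℚ(α) : ℚ] = 5`. The field `ℚ(√37, i√2)` has
degree `4`, because `ℚ(√37)` is real and `(i√2)² = -2`. The degrees `4` and `5` are coprime, so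
`ℚ(i√2, √37, α)` has degree `20`. Finally `i√74 = i√2 · √37`, so `K(√37, α) = ℚ(i√2, √37, α)`
and the tower law with `[K : ℚ] = 2` gives `[K(√37, α) : K] = 10`.
-/

open Polynomial IntermediateField Module

theorem Polynomial.Monic.eq_X_sq_add_C_mul_X_add_C {R : Type*} [CommRing R] {q : R[X]}
    (hq : q.Monic) (h2 : q.natDegree = 2) : q = X ^ 2 + C (q.coeff 1) * X + C (q.coeff 0) := by
  have hc2 : q.coeff 2 = 1 := h2 ▸ hq.coeff_natDegree
  conv_lhs => rw [q.as_sum_range' 3 (by omega)]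
  simp only [← C_mul_X_pow_eq_monomial, Finset.sum_range_succ, Finset.range_one,
    Finset.sum_singleton, pow_zero, mul_one, pow_one, hc2, map_one, one_mul]
  ring

theorem Polynomial.eq_zero_of_C_mul_X_add_C_eq_zero {R : Type*} [Semiring R] {r s : R}
    (h : C r * X + C s = 0) : r = 0 ∧ s = 0 :=
  ⟨by simpa using congrArg (coeff · 1) h, by simpa using congrArg (coeff · 0) h⟩

theorem not_isRoot_quintic_mod_three (c : ZMod 3) :
    ¬(X ^ 5 + 2 * X ^ 4 + 2 * X ^ 3 + 2 : (ZMod 3)[X]).IsRoot c := by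
  simp only [IsRoot.def, eval_add, eval_mul, eval_pow, eval_X, eval_ofNat]
  fin_cases c <;> decide

/-- Euclidean division by the generic monic quadratic `X² + aX + b`. -/
theorem quintic_mod_three_eq_mul_add (a b : ZMod 3) :
    (X ^ 5 + 2 * X ^ 4 + 2 * X ^ 3 + 2 : (ZMod 3)[X]) =
      (X ^ 2 + C a * X + C b) * (X ^ 3 + C (2 - a) * X ^ 2
        + C (2 - b - 2 * a + a ^ 2) * X + C (-a ^ 3 + 2 * a ^ 2 + 2 * a * b - 2 * a - 2 * b))
      + (C (a ^ 4 - 2 * a ^ 3 + 2 * a ^ 2 - 3 * a ^ 2 * b + 4 * a * b + b ^ 2 - 2 * b) * X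
        + C (2 + a ^ 3 * b - 2 * a ^ 2 * b - 2 * a * b ^ 2 + 2 * a * b + 2 * b ^ 2)) := by
  simp only [map_add, map_sub, map_mul, map_pow, map_neg, map_ofNat]
  ring

theorem quintic_mod_three_remainder_ne_zero (a b : ZMod 3) :
    ¬(a ^ 4 - 2 * a ^ 3 + 2 * a ^ 2 - 3 * a ^ 2 * b + 4 * a * b + b ^ 2 - 2 * b = 0 ∧
      2 + a ^ 3 * b - 2 * a ^ 2 * b - 2 * a * b ^ 2 + 2 * a * b + 2 * b ^ 2 = 0) := by
  fin_cases a <;> fin_cases b <;> decide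

theorem irreducible_quintic_mod_three :
    Irreducible (X ^ 5 + 2 * X ^ 4 + 2 * X ^ 3 + 2 : (ZMod 3)[X]) := by
  have hdeg : (X ^ 5 + 2 * X ^ 4 + 2 * X ^ 3 + 2 : (ZMod 3)[X]).natDegree = 5 := by
    compute_degree!
  rw [Monic.irreducible_iff_lt_natDegree_lt (by monicity!) (by rintro h; simp [h] at hdeg)]
  rintro q hq hqdeg hqp
  rw [hdeg, Finset.mem_Ioc] at hqdeg
  obtain hq1 | hq2 : q.natDegree = 1 ∨ q.natDegree = 2 := by omega
  · obtain ⟨b, rfl⟩ : ∃ b, q = X + C b := ⟨_, hq.eq_X_add_C hq1⟩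
    rw [← sub_neg_eq_add, ← map_neg, dvd_iff_isRoot] at hqp
    exact not_isRoot_quintic_mod_three _ hqp
  · obtain ⟨a, b, rfl⟩ : ∃ a b, q = X ^ 2 + C a * X + C b :=
      ⟨q.coeff 1, q.coeff 0, hq.eq_X_sq_add_C_mul_X_add_C hq2⟩
    rw [quintic_mod_three_eq_mul_add a b, dvd_add_right (dvd_mul_right _ _)] at hqp
    refine quintic_mod_three_remainder_ne_zero a b <| eq_zero_of_C_mul_X_add_C_eq_zero <|
      eq_zero_of_dvd_of_degree_lt hqp <| degree_linear_le.trans_lt ?_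
    rw [degree_eq_natDegree hq.ne_zero, hq2]
    exact_mod_cast one_lt_two

noncomputable def quintic : ℤ[X] :=
  X ^ 5 - 10 * X ^ 4 - 481 * X ^ 3 - 4440 * X ^ 2 - 16428 * X - 21904

theorem aeval_quintic (α : ℂ) :
    aeval α quintic = α ^ 5 - 10 * α ^ 4 - 481 * α ^ 3 - 4440 * α ^ 2 - 16428 * α - 21904 := by
  simp only [quintic, map_sub, map_mul, map_pow, aeval_X, map_ofNat]

theorem quintic_monic : quintic.Monic := by unfold quintic; monicity!

theorem quintic_natDegree : quintic.natDegree = 5 := by unfold quintic; compute_degree!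

theorem quintic_map_zmod_three :
    quintic.map (Int.castRingHom (ZMod 3)) = X ^ 5 + 2 * X ^ 4 + 2 * X ^ 3 + 2 := by
  simp only [quintic, Polynomial.map_sub, Polynomial.map_mul, Polynomial.map_pow,
    Polynomial.map_ofNat, Polynomial.map_X]
  reduce_mod_char

theorem irreducible_quintic_map_rat : Irreducible (quintic.map (Int.castRingHom ℚ)) :=
  (IsPrimitive.Int.irreducible_iff_irreducible_map_cast quintic_monic.isPrimitive).mp <|
    quintic_monic.irreducible_of_irreducible_map _ _ <|
      quintic_map_zmod_three ▸ irreducible_quintic_mod_three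

theorem finrank_adjoin_root_quintic {α : ℂ} (hα : aeval α quintic = 0) :
    finrank ℚ ℚ⟮α⟯ = 5 := by
  have hmonic : (quintic.map (Int.castRingHom ℚ)).Monic := quintic_monic.map _
  have hroot : aeval α (quintic.map (Int.castRingHom ℚ)) = 0 := by
    rw [← algebraMap_int_eq, aeval_map_algebraMap, hα]
  rw [adjoin.finrank ⟨_, hmonic, hroot⟩,
    ← minpoly.eq_of_irreducible_of_monic irreducible_quintic_map_rat hroot hmonic,
    quintic_monic.natDegree_map, quintic_natDegree]

theorem finrank_adjoin_simple_eq_two {K L : Type*} [Field K] [Field L] [Algebra K L] {x : L}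
    (hx : x ∉ (⊥ : IntermediateField K L)) (hsq : x ^ 2 ∈ (⊥ : IntermediateField K L)) :
    finrank K K⟮x⟯ = 2 := by
  obtain ⟨c, hc⟩ := mem_bot.mp hsq
  have hroot : aeval x (X ^ 2 - C c) = 0 := by simp [hc]
  have hint : IsIntegral K x := ⟨_, monic_X_pow_sub_C c two_ne_zero, hroot⟩
  have hne : finrank K K⟮x⟯ ≠ 1 := finrank_adjoin_simple_eq_one_iff.not.mpr hx
  have hle : (minpoly K x).natDegree ≤ 2 := natDegree_X_pow_sub_C (n := 2) (r := c) ▸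
    natDegree_le_of_dvd (minpoly.dvd K x hroot) (X_pow_sub_C_ne_zero two_pos c)
  have hpos := minpoly.natDegree_pos hint
  rw [adjoin.finrank hint] at hne ⊢
  omega

theorem IntermediateField.finrank_restrictScalars_eq_mul {F E : Type*} [Field F] [Field E]
    [Algebra F E] (K : IntermediateField F E) (T : IntermediateField K E) :
    finrank F (T.restrictScalars F) = finrank F K * finrank K T :=
  (finrank_mul_finrank F K T).symm

theorem IntermediateField.adjoin_insert_mul_insert {F E : Type*} [Field F] [Field E]
    [Algebra F E] {x y : E} (hy : y ≠ 0) (S : Set E) :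
    adjoin F (insert (x * y) (insert y S)) = adjoin F (insert x (insert y S)) := by
  have hS {T : Set E} {z : E} (hz : z ∈ T) : z ∈ adjoin F T := subset_adjoin F T hz
  apply le_antisymm <;> rw [adjoin_le_iff, Set.insert_subset_iff, Set.insert_subset_iff]
  · refine ⟨mul_mem (hS (by simp)) (hS (by simp)), hS (by simp), fun z hz ↦ hS (by simp [hz])⟩
  · refine ⟨?_, hS (by simp), fun z hz ↦ hS (by simp [hz])⟩
    simpa [hy] using div_mem (hS (Set.mem_insert (x * y) (insert y S)))
      (hS (Set.mem_insert_of_mem (x * y) (Set.mem_insert y S)))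

noncomputable def Complex.realIntermediateField : IntermediateField ℚ ℂ :=
  (Complex.ofRealAm.restrictScalars ℚ).fieldRange

theorem Complex.I_mul_sqrt_not_mem_realIntermediateField {d : ℝ} (hd : 0 < d) :
    Complex.I * Real.sqrt d ∉ Complex.realIntermediateField := by
  rintro ⟨r, hr⟩
  have him := congrArg Complex.im hr
  simp only [Complex.ofReal_im, Complex.mul_im, Complex.I_re, Complex.I_im, Complex.ofReal_re,
    zero_mul, one_mul, zero_add] at him
  exact (Real.sqrt_pos.mpr hd).ne him

theorem Complex.I_mul_sqrt_sq {d : ℝ} (hd : 0 ≤ d) : (Complex.I * Real.sqrt d) ^ 2 = -d := by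
  rw [mul_pow, Complex.I_sq, ← Complex.ofReal_pow, Real.sq_sqrt hd, neg_one_mul]

theorem sqrt_37_not_mem_bot : (Real.sqrt 37 : ℂ) ∉ (⊥ : IntermediateField ℚ ℂ) := by
  rintro ⟨q, hq⟩
  have hq' : ((q : ℝ) : ℂ) = Real.sqrt 37 := by simpa using hq
  exact (by norm_num : Irrational (Real.sqrt 37)) ⟨q, by exact_mod_cast hq'⟩

theorem finrank_adjoin_sqrt_37_I_mul_sqrt_two :
    finrank ℚ ℚ⟮(Real.sqrt 37 : ℂ), Complex.I * Real.sqrt 2⟯ = 4 := by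
  have hreal : ℚ⟮(Real.sqrt 37 : ℂ)⟯ ≤ Complex.realIntermediateField :=
    adjoin_simple_le_iff.mpr ⟨Real.sqrt 37, rfl⟩
  have h37 : finrank ℚ ℚ⟮(Real.sqrt 37 : ℂ)⟯ = 2 := by
    refine finrank_adjoin_simple_eq_two sqrt_37_not_mem_bot ⟨37, ?_⟩
    simp [← Complex.ofReal_pow]
  have hI2 : finrank ℚ⟮(Real.sqrt 37 : ℂ)⟯ ℚ⟮(Real.sqrt 37 : ℂ)⟯⟮Complex.I * Real.sqrt 2⟯ = 2 := by
    refine finrank_adjoin_simple_eq_two ?_ ⟨-2, ?_⟩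
    · rintro ⟨y, hy⟩
      exact Complex.I_mul_sqrt_not_mem_realIntermediateField two_pos (hreal (hy ▸ y.2))
    · rw [map_neg, map_ofNat, Complex.I_mul_sqrt_sq zero_le_two, Complex.ofReal_ofNat]
  rw [← adjoin_simple_adjoin_simple, finrank_restrictScalars_eq_mul, h37, hI2]

theorem finrank_adjoin_I_mul_sqrt_two_sqrt_37_root_quintic {α : ℂ} (hα : aeval α quintic = 0) :
    finrank ℚ ℚ⟮Complex.I * Real.sqrt 2, (Real.sqrt 37 : ℂ), α⟯ = 20 := by
  have hsup : ℚ⟮Complex.I * Real.sqrt 2, (Real.sqrt 37 : ℂ), α⟯ =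
      ℚ⟮(Real.sqrt 37 : ℂ), Complex.I * Real.sqrt 2⟯ ⊔ ℚ⟮α⟯ := by
    rw [← adjoin_union, Set.insert_union, Set.singleton_union, Set.insert_comm]
  have hcop : (finrank ℚ ℚ⟮(Real.sqrt 37 : ℂ), Complex.I * Real.sqrt 2⟯).Coprime
      (finrank ℚ ℚ⟮α⟯) := by
    rw [finrank_adjoin_sqrt_37_I_mul_sqrt_two, finrank_adjoin_root_quintic hα]; norm_num
  rw [hsup, (LinearDisjoint.of_finrank_coprime hcop).finrank_sup,
    finrank_adjoin_sqrt_37_I_mul_sqrt_two, finrank_adjoin_root_quintic hα]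

/-- For any root `α` of `X⁵ − 10X⁴ − 481X³ − 4440X² − 16428X − 21904` and
`K = ℚ(√−74)`, the field `K(√37, α)` is a degree `10` extension of `K`; equivalently
`[ℚ(i√2, √37, α) : ℚ] = 20`. -/
theorem hilbert_class_field_of_Q_sqrt_neg74 (α : ℂ)
    (hα : α ^ 5 - 10 * α ^ 4 - 481 * α ^ 3 - 4440 * α ^ 2 - 16428 * α - 21904 = 0) :
    Module.finrank (IntermediateField.adjoin ℚ ({Complex.I * (Real.sqrt 74 : ℂ)} : Set ℂ))
      (IntermediateField.adjoin
        (IntermediateField.adjoin ℚ ({Complex.I * (Real.sqrt 74 : ℂ)} : Set ℂ))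
        ({(Real.sqrt 37 : ℂ), α} : Set ℂ)) = 10 ∧
    Module.finrank ℚ
      (IntermediateField.adjoin ℚ
        ({Complex.I * (Real.sqrt 2 : ℂ), (Real.sqrt 37 : ℂ), α} : Set ℂ)) = 20 := by
  have hL := finrank_adjoin_I_mul_sqrt_two_sqrt_37_root_quintic ((aeval_quintic α).trans hα)
  refine ⟨?_, hL⟩
  have hK : finrank ℚ ℚ⟮Complex.I * Real.sqrt 74⟯ = 2 := by
    refine finrank_adjoin_simple_eq_two (fun h ↦
      Complex.I_mul_sqrt_not_mem_realIntermediateField (by norm_num)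
        (bot_le (a := Complex.realIntermediateField) h)) ⟨-74, ?_⟩
    simp [Complex.I_mul_sqrt_sq]
  have hfield : ℚ⟮Complex.I * Real.sqrt 74, (Real.sqrt 37 : ℂ), α⟯ =
      ℚ⟮Complex.I * Real.sqrt 2, (Real.sqrt 37 : ℂ), α⟯ := by
    have hsqrt : Complex.I * Real.sqrt 74 = Complex.I * Real.sqrt 2 * Real.sqrt 37 := by
      rw [mul_assoc, ← Complex.ofReal_mul, ← Real.sqrt_mul zero_le_two]; norm_num
    rw [hsqrt]
    exact adjoin_insert_mul_insert (by simp) _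
  have htower := finrank_restrictScalars_eq_mul ℚ⟮Complex.I * Real.sqrt 74⟯
    (adjoin _ {(Real.sqrt 37 : ℂ), α})
  rw [adjoin_adjoin_left, Set.singleton_union, hfield, hL, hK] at htower
  omega
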